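/- Suppose Ψ₀, Ψ₁, Ψ₂, Ψ₃, Ψ₄ : ℝ → ℂ have a stationary-type expansion with data (a₀, b₀, b₁, c₀, c₁, c₂, c₃, d₀, d₁, e₀). Then, as r → +∞, I(r)³ − 27J(r)² = 27·c₀³·e₀·(3a₀c₀ − 2b₀²)·r⁻²¹ + O(r⁻²²). In other words, the leading (r⁻²¹) coefficient of I³ − 27J² equals 27Ψ₂⁰³Ψ₄³(3Ψ₀⁰Ψ₂⁰ − 2(Ψ₁⁰)²). -/
import Mathlib

open Filter Asymptotics

private lemma zpow_isBigO_zpow {k m : ℤ} (h : k ≤ m) :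
    (fun r : ℝ => r ^ k) =O[atTop] fun r : ℝ => r ^ m := by
  refine IsBigO.of_bound 1 ?_
  filter_upwards [eventually_ge_atTop (1:ℝ)] with r hr
  have hr0 : (0:ℝ) < r := lt_of_lt_of_le one_pos hr
  rw [one_mul, Real.norm_eq_abs, Real.norm_eq_abs, abs_of_pos (zpow_pos hr0 _),
    abs_of_pos (zpow_pos hr0 _)]
  exact zpow_le_zpow_right₀ hr h

private lemma const_mul_zpow_isBigO (c : ℂ) (k : ℤ) :
    (fun r : ℝ => c * (r : ℂ) ^ k) =O[atTop] fun r : ℝ => r ^ k := by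
  refine IsBigO.of_bound ‖c‖ (Filter.Eventually.of_forall fun r => ?_)
  simp [norm_mul, norm_zpow, Complex.norm_real]

private lemma cO (c : ℂ) {k m : ℤ} (h : k ≤ m) :
    (fun r : ℝ => c * (r : ℂ) ^ k) =O[atTop] fun r : ℝ => r ^ m :=
  (const_mul_zpow_isBigO c k).trans (zpow_isBigO_zpow h)

private lemma wk {f : ℝ → ℂ} {k m : ℤ} (h : k ≤ m)
    (hf : f =O[atTop] fun r : ℝ => r ^ k) : f =O[atTop] fun r : ℝ => r ^ m :=
  hf.trans (zpow_isBigO_zpow h)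

private lemma mulO' {f g : ℝ → ℂ} {a b : ℤ}
    (hf : f =O[atTop] fun r : ℝ => r ^ a) (hg : g =O[atTop] fun r : ℝ => r ^ b) :
    (fun r => f r * g r) =O[atTop] fun r : ℝ => r ^ (a + b) := by
  refine (hf.mul hg).trans (Filter.EventuallyEq.isBigO ?_)
  filter_upwards [eventually_gt_atTop (0:ℝ)] with r hr
  exact (zpow_add₀ (ne_of_gt hr) a b).symm

/-- The curvature invariant `I = Ψ₀Ψ₄ − 4Ψ₁Ψ₃ + 3Ψ₂²`. -/
noncomputable def curvI (Ψ₀ Ψ₁ Ψ₂ Ψ₃ Ψ₄ : ℝ → ℂ) (r : ℝ) : ℂ :=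
  Ψ₀ r * Ψ₄ r - 4 * Ψ₁ r * Ψ₃ r + 3 * (Ψ₂ r) ^ 2

/-- The curvature invariant `J = Ψ₄Ψ₂Ψ₀ + 2Ψ₃Ψ₂Ψ₁ − Ψ₂³ − Ψ₃²Ψ₀ − Ψ₁²Ψ₄`. -/
noncomputable def curvJ (Ψ₀ Ψ₁ Ψ₂ Ψ₃ Ψ₄ : ℝ → ℂ) (r : ℝ) : ℂ :=
  Ψ₄ r * Ψ₂ r * Ψ₀ r + 2 * Ψ₃ r * Ψ₂ r * Ψ₁ r - (Ψ₂ r) ^ 3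
    - (Ψ₃ r) ^ 2 * Ψ₀ r - (Ψ₁ r) ^ 2 * Ψ₄ r

/-- The Weyl scalars of an asymptotically flat stationary spacetime, at a fixed
angle, have a stationary-type expansion with the given coefficient data. -/
def HasStationaryExpansion (Ψ₀ Ψ₁ Ψ₂ Ψ₃ Ψ₄ : ℝ → ℂ)
    (a₀ b₀ b₁ c₀ c₁ c₂ c₃ d₀ d₁ e₀ : ℂ) : Prop :=
  ((fun r : ℝ => Ψ₀ r - a₀ * (r : ℂ) ^ (-5 : ℤ))
      =O[atTop] fun r : ℝ => r ^ (-6 : ℤ)) ∧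
  ((fun r : ℝ => Ψ₁ r - (b₀ * (r : ℂ) ^ (-4 : ℤ) + b₁ * (r : ℂ) ^ (-5 : ℤ)))
      =O[atTop] fun r : ℝ => r ^ (-6 : ℤ)) ∧
  ((fun r : ℝ => Ψ₂ r - (c₀ * (r : ℂ) ^ (-3 : ℤ) + c₁ * (r : ℂ) ^ (-4 : ℤ)
        + c₂ * (r : ℂ) ^ (-5 : ℤ) + c₃ * (r : ℂ) ^ (-6 : ℤ)))
      =O[atTop] fun r : ℝ => r ^ (-7 : ℤ)) ∧
  ((fun r : ℝ => Ψ₃ r - (d₀ * (r : ℂ) ^ (-4 : ℤ) + d₁ * (r : ℂ) ^ (-5 : ℤ)))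
      =O[atTop] fun r : ℝ => r ^ (-6 : ℤ)) ∧
  ((fun r : ℝ => Ψ₄ r - e₀ * (r : ℂ) ^ (-4 : ℤ))
      =O[atTop] fun r : ℝ => r ^ (-5 : ℤ))

set_option maxHeartbeats 1000000 in
/-- For a stationary-type expansion, the leading `r⁻²¹` coefficient of
`I³ − 27J²` is `27·c₀³·e₀·(3a₀c₀ − 2b₀²)`, i.e. `27Ψ₂⁰³Ψ₄³(3Ψ₀⁰Ψ₂⁰ − 2(Ψ₁⁰)²)`. -/
theorem stationary_IJ_leading_coefficient (Ψ₀ Ψ₁ Ψ₂ Ψ₃ Ψ₄ : ℝ → ℂ)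
    (a₀ b₀ b₁ c₀ c₁ c₂ c₃ d₀ d₁ e₀ : ℂ)
    (h : HasStationaryExpansion Ψ₀ Ψ₁ Ψ₂ Ψ₃ Ψ₄ a₀ b₀ b₁ c₀ c₁ c₂ c₃ d₀ d₁ e₀) :
    (fun r : ℝ => (curvI Ψ₀ Ψ₁ Ψ₂ Ψ₃ Ψ₄ r) ^ 3 - 27 * (curvJ Ψ₀ Ψ₁ Ψ₂ Ψ₃ Ψ₄ r) ^ 2
        - 27 * c₀ ^ 3 * e₀ * (3 * a₀ * c₀ - 2 * b₀ ^ 2) * (r : ℂ) ^ (-21 : ℤ))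
      =O[atTop] fun r : ℝ => r ^ (-22 : ℤ) := by
  obtain ⟨h0, h1, h2, h3, h4⟩ := h
  obtain ⟨i₆, hi6⟩ : ∃ x : ℂ, x = (3 : ℂ) * c₀ ^ 2 := ⟨_, rfl⟩
  obtain ⟨i₇, hi7⟩ : ∃ x : ℂ, x = (6 : ℂ) * c₀ * c₁ := ⟨_, rfl⟩
  obtain ⟨i₈, hi8⟩ : ∃ x : ℂ, x = (3 : ℂ) * c₁ ^ 2 + (6 : ℂ) * c₀ * c₂ - (4 : ℂ) * b₀ * d₀ := ⟨_, rfl⟩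
  obtain ⟨i₉, hi9⟩ : ∃ x : ℂ, x = (6 : ℂ) * c₁ * c₂ + (6 : ℂ) * c₀ * c₃ - (4 : ℂ) * b₁ * d₀ - (4 : ℂ) * b₀ * d₁ + a₀ * e₀ := ⟨_, rfl⟩
  obtain ⟨j₉, hj9⟩ : ∃ x : ℂ, x = -c₀ ^ 3 := ⟨_, rfl⟩
  obtain ⟨j₁₀, hj10⟩ : ∃ x : ℂ, x = -(3 : ℂ) * c₀ ^ 2 * c₁ := ⟨_, rfl⟩
  obtain ⟨j₁₁, hj11⟩ : ∃ x : ℂ, x = -(3 : ℂ) * c₀ * c₁ ^ 2 - (3 : ℂ) * c₀ ^ 2 * c₂ + (2 : ℂ) * b₀ * c₀ * d₀ := ⟨_, rfl⟩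
  obtain ⟨j₁₂, hj12⟩ : ∃ x : ℂ, x = -c₁ ^ 3 - (6 : ℂ) * c₀ * c₁ * c₂ - (3 : ℂ) * c₀ ^ 2 * c₃ + (2 : ℂ) * b₁ * c₀ * d₀ + (2 : ℂ) * b₀ * c₁ * d₀ + (2 : ℂ) * b₀ * c₀ * d₁ - b₀ ^ 2 * e₀ + a₀ * c₀ * e₀ := ⟨_, rfl⟩
  obtain ⟨IpF, hIpF⟩ : ∃ x : ℝ → ℂ, x = fun r : ℝ => (a₀ * (r : ℂ) ^ (-5 : ℤ)) * (e₀ * (r : ℂ) ^ (-4 : ℤ)) - 4 * ((b₀ * (r : ℂ) ^ (-4 : ℤ) + b₁ * (r : ℂ) ^ (-5 : ℤ)) * (d₀ * (r : ℂ) ^ (-4 : ℤ) + d₁ * (r : ℂ) ^ (-5 : ℤ))) + 3 * ((c₀ * (r : ℂ) ^ (-3 : ℤ) + c₁ * (r : ℂ) ^ (-4 : ℤ) + c₂ * (r : ℂ) ^ (-5 : ℤ) + c₃ * (r : ℂ) ^ (-6 : ℤ)) * (c₀ * (r : ℂ) ^ (-3 : ℤ) + c₁ * (r : ℂ) ^ (-4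 : ℤ) + c₂ * (r : ℂ) ^ (-5 : ℤ) + c₃ * (r : ℂ) ^ (-6 : ℤ))) := ⟨_, rfl⟩
  obtain ⟨JpF, hJpF⟩ : ∃ x : ℝ → ℂ, x = fun r : ℝ => (e₀ * (r : ℂ) ^ (-4 : ℤ)) * (c₀ * (r : ℂ) ^ (-3 : ℤ) + c₁ * (r : ℂ) ^ (-4 : ℤ) + c₂ * (r : ℂ) ^ (-5 : ℤ) + c₃ * (r : ℂ) ^ (-6 : ℤ)) * (a₀ * (r : ℂ) ^ (-5 : ℤ)) + 2 * ((d₀ * (r : ℂ) ^ (-4 : ℤ) + d₁ * (r : ℂ) ^ (-5 : ℤ)) * (c₀ * (r : ℂ) ^ (-3 : ℤ) + c₁ * (r : ℂ) ^ (-4 : ℤ) + c₂ * (r : ℂ) ^ (-5 : ℤ) + c₃ * (r : ℂ) ^ (-6 : ℤ)) * (b₀ * (r : ℂ) ^ (-4 : ℤ) + b₁ * (r : ℂ) ^ (-5 : ℤ))) - (c₀ * (r : ℂ) ^ (-3 : ℤ) + c₁ * (r : ℂ) ^ (-4 : ℤ) + c₂ * (r : ℂ) ^ (-5 : ℤ)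 + c₃ * (r : ℂ) ^ (-6 : ℤ)) * (c₀ * (r : ℂ) ^ (-3 : ℤ) + c₁ * (r : ℂ) ^ (-4 : ℤ) + c₂ * (r : ℂ) ^ (-5 : ℤ) + c₃ * (r : ℂ) ^ (-6 : ℤ)) * (c₀ * (r : ℂ) ^ (-3 : ℤ) + c₁ * (r : ℂ) ^ (-4 : ℤ) + c₂ * (r : ℂ) ^ (-5 : ℤ) + c₃ * (r : ℂ) ^ (-6 : ℤ)) - (d₀ * (r : ℂ) ^ (-4 : ℤ) + d₁ * (r : ℂ) ^ (-5 : ℤ)) * (d₀ * (r : ℂ) ^ (-4 : ℤ) + d₁ * (r : ℂ) ^ (-5 : ℤ)) * (a₀ * (r : ℂ) ^ (-5 : ℤ)) - (b₀ * (r : ℂ) ^ (-4 : ℤ) + b₁ * (r : ℂ) ^ (-5 : ℤ)) * (b₀ * (r : ℂ) ^ (-4 : ℤ) + b₁ * (r : ℂ) ^ (-5 : ℤ)) * (e₀ * (r : ℂ) ^ (-4 : ℤ)) := ⟨_, rfl⟩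
  obtain ⟨AF, hAF⟩ : ∃ x : ℝ → ℂ, x = fun r : ℝ => i₆ * (r : ℂ) ^ (-6 : ℤ) + i₇ * (r : ℂ) ^ (-7 : ℤ) + i₈ * (r : ℂ) ^ (-8 : ℤ) + i₉ * (r : ℂ) ^ (-9 : ℤ) := ⟨_, rfl⟩
  obtain ⟨CF, hCF⟩ : ∃ x : ℝ → ℂ, x = fun r : ℝ => j₉ * (r : ℂ) ^ (-9 : ℤ) + j₁₀ * (r : ℂ) ^ (-10 : ℤ) + j₁₁ * (r : ℂ) ^ (-11 : ℤ) + j₁₂ * (r : ℂ) ^ (-12 : ℤ) := ⟨_, rfl⟩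
  have oP0 : (fun r : ℝ => (a₀ * (r : ℂ) ^ (-5 : ℤ))) =O[atTop] (fun r : ℝ => r ^ (-5 : ℤ)) := const_mul_zpow_isBigO a₀ (-5)
  have oP1 : (fun r : ℝ => (b₀ * (r : ℂ) ^ (-4 : ℤ) + b₁ * (r : ℂ) ^ (-5 : ℤ))) =O[atTop] (fun r : ℝ => r ^ (-4 : ℤ)) := (cO b₀ (by norm_num)).add (cO b₁ (by norm_num))
  have oP2 : (fun r : ℝ => (c₀ * (r : ℂ) ^ (-3 : ℤ) + c₁ * (r : ℂ) ^ (-4 : ℤ) + c₂ * (r : ℂ) ^ (-5 : ℤ) + c₃ * (r : ℂ) ^ (-6 : ℤ))) =O[atTop] (fun r : ℝ => r ^ (-3 : ℤ)) := (((cO c₀ (by norm_num)).add (cO c₁ (by norm_num))).add (cO c₂ (by norm_num))).add (cO c₃ (by norm_num))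
  have oP3 : (fun r : ℝ => (d₀ * (r : ℂ) ^ (-4 : ℤ) + d₁ * (r : ℂ) ^ (-5 : ℤ))) =O[atTop] (fun r : ℝ => r ^ (-4 : ℤ)) := (cO d₀ (by norm_num)).add (cO d₁ (by norm_num))
  have oP4 : (fun r : ℝ => (e₀ * (r : ℂ) ^ (-4 : ℤ))) =O[atTop] (fun r : ℝ => r ^ (-4 : ℤ)) := by exact const_mul_zpow_isBigO e₀ (-4)
  have oΨ₀ : (fun r : ℝ => Ψ₀ r) =O[atTop] (fun r : ℝ => r ^ (-5 : ℤ)) := by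
    have e : (fun r : ℝ => Ψ₀ r) = fun r : ℝ => (Ψ₀ r - (a₀ * (r : ℂ) ^ (-5 : ℤ))) + (a₀ * (r : ℂ) ^ (-5 : ℤ)) := by funext r; ring
    rw [e]; exact (wk (by norm_num) h0).add oP0
  have oΨ₁ : (fun r : ℝ => Ψ₁ r) =O[atTop] (fun r : ℝ => r ^ (-4 : ℤ)) := by
    have e : (fun r : ℝ => Ψ₁ r) = fun r : ℝ => (Ψ₁ r - (b₀ * (r : ℂ) ^ (-4 : ℤ) + b₁ * (r : ℂ) ^ (-5 : ℤ))) + (b₀ * (r : ℂ) ^ (-4 : ℤ) + b₁ * (r : ℂ) ^ (-5 : ℤ)) := by funext r; ring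
    rw [e]; exact (wk (by norm_num) h1).add oP1
  have oΨ₂ : (fun r : ℝ => Ψ₂ r) =O[atTop] (fun r : ℝ => r ^ (-3 : ℤ)) := by
    have e : (fun r : ℝ => Ψ₂ r) = fun r : ℝ => (Ψ₂ r - (c₀ * (r : ℂ) ^ (-3 : ℤ) + c₁ * (r : ℂ) ^ (-4 : ℤ) + c₂ * (r : ℂ) ^ (-5 : ℤ) + c₃ * (r : ℂ) ^ (-6 : ℤ))) + (c₀ * (r : ℂ) ^ (-3 : ℤ) + c₁ * (r : ℂ) ^ (-4 : ℤ) + c₂ * (r : ℂ) ^ (-5 : ℤ) + c₃ * (r : ℂ) ^ (-6 : ℤ)) := by funext r; ring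
    rw [e]; exact (wk (by norm_num) h2).add oP2
  have oΨ₃ : (fun r : ℝ => Ψ₃ r) =O[atTop] (fun r : ℝ => r ^ (-4 : ℤ)) := by
    have e : (fun r : ℝ => Ψ₃ r) = fun r : ℝ => (Ψ₃ r - (d₀ * (r : ℂ) ^ (-4 : ℤ) + d₁ * (r : ℂ) ^ (-5 : ℤ))) + (d₀ * (r : ℂ) ^ (-4 : ℤ) + d₁ * (r : ℂ) ^ (-5 : ℤ)) := by funext r; ring
    rw [e]; exact (wk (by norm_num) h3).add oP3
  have oΨ₄ : (fun r : ℝ => Ψ₄ r) =O[atTop] (fun r : ℝ => r ^ (-4 : ℤ)) := by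
    have e : (fun r : ℝ => Ψ₄ r) = fun r : ℝ => (Ψ₄ r - (e₀ * (r : ℂ) ^ (-4 : ℤ))) + (e₀ * (r : ℂ) ^ (-4 : ℤ)) := by funext r; ring
    rw [e]; exact (wk (by norm_num) h4).add oP4
  have oIp : (fun r : ℝ => IpF r) =O[atTop] (fun r : ℝ => r ^ (-6 : ℤ)) := by
    simp only [hIpF]
    have v1 : (fun r : ℝ => (a₀ * (r : ℂ) ^ (-5 : ℤ)) * (e₀ * (r : ℂ) ^ (-4 : ℤ))) =O[atTop] (fun r : ℝ => r ^ (-9 : ℤ)) := wk (by norm_num) (mulO' oP0 oP4)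
    have v2 : (fun r : ℝ => (b₀ * (r : ℂ) ^ (-4 : ℤ) + b₁ * (r : ℂ) ^ (-5 : ℤ)) * (d₀ * (r : ℂ) ^ (-4 : ℤ) + d₁ * (r : ℂ) ^ (-5 : ℤ))) =O[atTop] (fun r : ℝ => r ^ (-8 : ℤ)) := wk (by norm_num) (mulO' oP1 oP3)
    have v3 : (fun r : ℝ => (c₀ * (r : ℂ) ^ (-3 : ℤ) + c₁ * (r : ℂ) ^ (-4 : ℤ) + c₂ * (r : ℂ) ^ (-5 : ℤ) + c₃ * (r : ℂ) ^ (-6 : ℤ)) * (c₀ * (r : ℂ) ^ (-3 : ℤ) + c₁ * (r : ℂ) ^ (-4 : ℤ) + c₂ * (r : ℂ) ^ (-5 : ℤ) + c₃ * (r : ℂ) ^ (-6 : ℤ))) =O[atTop] (fun r : ℝ => r ^ (-6 : ℤ)) := wk (by norm_num) (mulO' oP2 oP2)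
    exact ((wk (by norm_num) v1).sub ((wk (by norm_num) v2).const_mul_left 4)).add (v3.const_mul_left 3)
  have oJp : (fun r : ℝ => JpF r) =O[atTop] (fun r : ℝ => r ^ (-9 : ℤ)) := by
    simp only [hJpF]
    have u1 : (fun r : ℝ => (e₀ * (r : ℂ) ^ (-4 : ℤ)) * (c₀ * (r : ℂ) ^ (-3 : ℤ) + c₁ * (r : ℂ) ^ (-4 : ℤ) + c₂ * (r : ℂ) ^ (-5 : ℤ) + c₃ * (r : ℂ) ^ (-6 : ℤ)) * (a₀ * (r : ℂ) ^ (-5 : ℤ))) =O[atTop] (fun r : ℝ => r ^ (-12 : ℤ)) := wk (by norm_num) (mulO' (mulO' oP4 oP2) oP0)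
    have u2 : (fun r : ℝ => (d₀ * (r : ℂ) ^ (-4 : ℤ) + d₁ * (r : ℂ) ^ (-5 : ℤ)) * (c₀ * (r : ℂ) ^ (-3 : ℤ) + c₁ * (r : ℂ) ^ (-4 : ℤ) + c₂ * (r : ℂ) ^ (-5 : ℤ) + c₃ * (r : ℂ) ^ (-6 : ℤ)) * (b₀ * (r : ℂ) ^ (-4 : ℤ) + b₁ * (r : ℂ) ^ (-5 : ℤ))) =O[atTop] (fun r : ℝ => r ^ (-11 : ℤ)) := wk (by norm_num) (mulO' (mulO' oP3 oP2) oP1)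
    have u3 : (fun r : ℝ => (c₀ * (r : ℂ) ^ (-3 : ℤ) + c₁ * (r : ℂ) ^ (-4 : ℤ) + c₂ * (r : ℂ) ^ (-5 : ℤ) + c₃ * (r : ℂ) ^ (-6 : ℤ)) * (c₀ * (r : ℂ) ^ (-3 : ℤ) + c₁ * (r : ℂ) ^ (-4 : ℤ) + c₂ * (r : ℂ) ^ (-5 : ℤ) + c₃ * (r : ℂ) ^ (-6 : ℤ)) * (c₀ * (r : ℂ) ^ (-3 : ℤ) + c₁ * (r : ℂ) ^ (-4 : ℤ) + c₂ * (r : ℂ) ^ (-5 : ℤ) + c₃ * (r : ℂ) ^ (-6 : ℤ))) =O[atTop] (fun r : ℝ => r ^ (-9 : ℤ)) := wk (by norm_num) (mulO' (mulO' oP2 oP2) oP2)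
    have u4 : (fun r : ℝ => (d₀ * (r : ℂ) ^ (-4 : ℤ) + d₁ * (r : ℂ) ^ (-5 : ℤ)) * (d₀ * (r : ℂ) ^ (-4 : ℤ) + d₁ * (r : ℂ) ^ (-5 : ℤ)) * (a₀ * (r : ℂ) ^ (-5 : ℤ))) =O[atTop] (fun r : ℝ => r ^ (-13 : ℤ)) := wk (by norm_num) (mulO' (mulO' oP3 oP3) oP0)
    have u5 : (fun r : ℝ => (b₀ * (r : ℂ) ^ (-4 : ℤ) + b₁ * (r : ℂ) ^ (-5 : ℤ)) * (b₀ * (r : ℂ) ^ (-4 : ℤ) + b₁ * (r : ℂ) ^ (-5 : ℤ)) * (e₀ * (r : ℂ) ^ (-4 : ℤ))) =O[atTop] (fun r : ℝ => r ^ (-12 : ℤ)) := wk (by norm_num) (mulO' (mulO' oP1 oP1) oP4)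
    exact ((((wk (by norm_num) u1).add ((wk (by norm_num) u2).const_mul_left 2)).sub u3).sub (wk (by norm_num) u4)).sub (wk (by norm_num) u5)
  have oA : (fun r : ℝ => AF r) =O[atTop] (fun r : ℝ => r ^ (-6 : ℤ)) := by
    simp only [hAF]
    exact ((((cO _ (by norm_num)).add (cO _ (by norm_num))).add (cO _ (by norm_num))).add (cO _ (by norm_num)))
  have oC : (fun r : ℝ => CF r) =O[atTop] (fun r : ℝ => r ^ (-9 : ℤ)) := by
    simp only [hCF]
    exact ((((cO _ (by norm_num)).add (cO _ (by norm_num))).add (cO _ (by norm_num))).add (cO _ (by norm_num)))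
  have dI : (fun r : ℝ => curvI Ψ₀ Ψ₁ Ψ₂ Ψ₃ Ψ₄ r - IpF r) =O[atTop] (fun r : ℝ => r ^ (-10 : ℤ)) := by
    have e : (fun r : ℝ => curvI Ψ₀ Ψ₁ Ψ₂ Ψ₃ Ψ₄ r - IpF r) = fun r : ℝ =>
        (Ψ₀ r - (a₀ * (r : ℂ) ^ (-5 : ℤ))) * Ψ₄ r + (a₀ * (r : ℂ) ^ (-5 : ℤ)) * (Ψ₄ r - (e₀ * (r : ℂ) ^ (-4 : ℤ))) - 4 * ((Ψ₁ r - (b₀ * (r : ℂ) ^ (-4 : ℤ) + b₁ * (r : ℂ) ^ (-5 : ℤ))) * Ψ₃ r) - 4 * ((b₀ * (r : ℂ) ^ (-4 : ℤ) + b₁ * (r : ℂ) ^ (-5 : ℤ)) * (Ψ₃ r - (d₀ * (r : ℂ) ^ (-4 : ℤ) + d₁ * (r : ℂ) ^ (-5 : ℤ))))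
          + 3 * ((Ψ₂ r - (c₀ * (r : ℂ) ^ (-3 : ℤ) + c₁ * (r : ℂ) ^ (-4 : ℤ) + c₂ * (r : ℂ) ^ (-5 : ℤ) + c₃ * (r : ℂ) ^ (-6 : ℤ))) * (Ψ₂ r + (c₀ * (r : ℂ) ^ (-3 : ℤ) + c₁ * (r : ℂ) ^ (-4 : ℤ) + c₂ * (r : ℂ) ^ (-5 : ℤ) + c₃ * (r : ℂ) ^ (-6 : ℤ)))) := by
      funext r; simp only [curvI, hIpF]; ring
    rw [e]
    have t1 : (fun r : ℝ => (Ψ₀ r - (a₀ * (r : ℂ) ^ (-5 : ℤ))) * Ψ₄ r) =O[atTop] (fun r : ℝ => r ^ (-10 : ℤ)) := wk (by norm_num) (mulO' h0 oΨ₄)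
    have t2 : (fun r : ℝ => (a₀ * (r : ℂ) ^ (-5 : ℤ)) * (Ψ₄ r - (e₀ * (r : ℂ) ^ (-4 : ℤ)))) =O[atTop] (fun r : ℝ => r ^ (-10 : ℤ)) := wk (by norm_num) (mulO' oP0 h4)
    have t3 : (fun r : ℝ => (Ψ₁ r - (b₀ * (r : ℂ) ^ (-4 : ℤ) + b₁ * (r : ℂ) ^ (-5 : ℤ))) * Ψ₃ r) =O[atTop] (fun r : ℝ => r ^ (-10 : ℤ)) := wk (by norm_num) (mulO' h1 oΨ₃)
    have t4 : (fun r : ℝ => (b₀ * (r : ℂ) ^ (-4 : ℤ) + b₁ * (r : ℂ) ^ (-5 : ℤ)) * (Ψ₃ r - (d₀ * (r : ℂ) ^ (-4 : ℤ) + d₁ * (r : ℂ) ^ (-5 : ℤ)))) =O[atTop] (fun r : ℝ => r ^ (-10 : ℤ)) := wk (by norm_num) (mulO' oP1 h3)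
    have t5 : (fun r : ℝ => Ψ₂ r + (c₀ * (r : ℂ) ^ (-3 : ℤ) + c₁ * (r : ℂ) ^ (-4 : ℤ) + c₂ * (r : ℂ) ^ (-5 : ℤ) + c₃ * (r : ℂ) ^ (-6 : ℤ))) =O[atTop] (fun r : ℝ => r ^ (-3 : ℤ)) := oΨ₂.add oP2
    have t6 : (fun r : ℝ => (Ψ₂ r - (c₀ * (r : ℂ) ^ (-3 : ℤ) + c₁ * (r : ℂ) ^ (-4 : ℤ) + c₂ * (r : ℂ) ^ (-5 : ℤ) + c₃ * (r : ℂ) ^ (-6 : ℤ))) * (Ψ₂ r + (c₀ * (r : ℂ) ^ (-3 : ℤ) + c₁ * (r : ℂ) ^ (-4 : ℤ) + c₂ * (r : ℂ) ^ (-5 : ℤ) + c₃ * (r : ℂ) ^ (-6 : ℤ)))) =O[atTop] (fun r : ℝ => r ^ (-10 : ℤ)) := wk (by norm_num) (mulO' h2 t5)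
    exact (((t1.add t2).sub (t3.const_mul_left 4)).sub (t4.const_mul_left 4)).add (t6.const_mul_left 3)
  have dJ : (fun r : ℝ => curvJ Ψ₀ Ψ₁ Ψ₂ Ψ₃ Ψ₄ r - JpF r) =O[atTop] (fun r : ℝ => r ^ (-13 : ℤ)) := by
    have e : (fun r : ℝ => curvJ Ψ₀ Ψ₁ Ψ₂ Ψ₃ Ψ₄ r - JpF r) = fun r : ℝ =>
        (Ψ₄ r - (e₀ * (r : ℂ) ^ (-4 : ℤ))) * Ψ₂ r * Ψ₀ r + (e₀ * (r : ℂ) ^ (-4 : ℤ)) * (Ψ₂ r - (c₀ * (r : ℂ) ^ (-3 : ℤ) + c₁ * (r : ℂ) ^ (-4 : ℤ) + c₂ * (r : ℂ) ^ (-5 : ℤ) + c₃ * (r : ℂ) ^ (-6 : ℤ))) * Ψ₀ r + (e₀ * (r : ℂ) ^ (-4 : ℤ)) * (c₀ * (r : ℂ) ^ (-3 : ℤ) + c₁ * (r : ℂ) ^ (-4 : ℤ) + c₂ * (r : ℂ) ^ (-5 : ℤ) + c₃ * (r : ℂ) ^ (-6 : ℤ)) * (Ψ₀ r - (a₀ *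 (r : ℂ) ^ (-5 : ℤ)))
          + 2 * ((Ψ₃ r - (d₀ * (r : ℂ) ^ (-4 : ℤ) + d₁ * (r : ℂ) ^ (-5 : ℤ))) * Ψ₂ r * Ψ₁ r) + 2 * ((d₀ * (r : ℂ) ^ (-4 : ℤ) + d₁ * (r : ℂ) ^ (-5 : ℤ)) * (Ψ₂ r - (c₀ * (r : ℂ) ^ (-3 : ℤ) + c₁ * (r : ℂ) ^ (-4 : ℤ) + c₂ * (r : ℂ) ^ (-5 : ℤ) + c₃ * (r : ℂ) ^ (-6 : ℤ))) * Ψ₁ r) + 2 * ((d₀ * (r : ℂ) ^ (-4 : ℤ) + d₁ * (r : ℂ) ^ (-5 : ℤ)) * (c₀ * (r : ℂ) ^ (-3 : ℤ) + c₁ * (r : ℂ) ^ (-4 : ℤ) + c₂ * (r : ℂ) ^ (-5 : ℤ) + c₃ * (r : ℂ) ^ (-6 : ℤ)) * (Ψ₁ r - (b₀ * (r : ℂ) ^ (-4 : ℤ) + b₁ * (r : ℂ) ^ (-5 : ℤ))))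
          - (Ψ₂ r - (c₀ * (r : ℂ) ^ (-3 : ℤ) + c₁ * (r : ℂ) ^ (-4 : ℤ) + c₂ * (r : ℂ) ^ (-5 : ℤ) + c₃ * (r : ℂ) ^ (-6 : ℤ))) * (Ψ₂ r * Ψ₂ r + Ψ₂ r * (c₀ * (r : ℂ) ^ (-3 : ℤ) + c₁ * (r : ℂ) ^ (-4 : ℤ) + c₂ * (r : ℂ) ^ (-5 : ℤ) + c₃ * (r : ℂ) ^ (-6 : ℤ)) + (c₀ * (r : ℂ) ^ (-3 : ℤ) + c₁ * (r : ℂ) ^ (-4 : ℤ) + c₂ * (r : ℂ) ^ (-5 : ℤ) + c₃ * (r : ℂ) ^ (-6 : ℤ)) * (c₀ * (r : ℂ) ^ (-3 : ℤ) + c₁ * (r : ℂ) ^ (-4 : ℤ) + c₂ * (r : ℂ) ^ (-5 : ℤ) + c₃ * (r : ℂ) ^ (-6 : ℤ)))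
          - (Ψ₃ r - (d₀ * (r : ℂ) ^ (-4 : ℤ) + d₁ * (r : ℂ) ^ (-5 : ℤ))) * (Ψ₃ r + (d₀ * (r : ℂ) ^ (-4 : ℤ) + d₁ * (r : ℂ) ^ (-5 : ℤ))) * Ψ₀ r - (d₀ * (r : ℂ) ^ (-4 : ℤ) + d₁ * (r : ℂ) ^ (-5 : ℤ)) * (d₀ * (r : ℂ) ^ (-4 : ℤ) + d₁ * (r : ℂ) ^ (-5 : ℤ)) * (Ψ₀ r - (a₀ * (r : ℂ) ^ (-5 : ℤ)))
          - (Ψ₁ r - (b₀ * (r : ℂ) ^ (-4 : ℤ) + b₁ * (r : ℂ) ^ (-5 : ℤ))) * (Ψ₁ r + (b₀ * (r : ℂ) ^ (-4 : ℤ) + b₁ * (r : ℂ) ^ (-5 : ℤ))) * Ψ₄ r - (b₀ * (r : ℂ) ^ (-4 : ℤ) + b₁ * (r : ℂ) ^ (-5 : ℤ)) * (b₀ * (r : ℂ) ^ (-4 : ℤ) + b₁ * (r : ℂ) ^ (-5 : ℤ)) * (Ψ₄ r - (e₀ * (r : ℂ) ^ (-4 : ℤ))) := by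
      funext r; simp only [curvJ, hJpF]; ring
    rw [e]
    have t1 : (fun r : ℝ => (Ψ₄ r - (e₀ * (r : ℂ) ^ (-4 : ℤ))) * Ψ₂ r * Ψ₀ r) =O[atTop] (fun r : ℝ => r ^ (-13 : ℤ)) := wk (by norm_num) (mulO' (mulO' h4 oΨ₂) oΨ₀)
    have t2 : (fun r : ℝ => (e₀ * (r : ℂ) ^ (-4 : ℤ)) * (Ψ₂ r - (c₀ * (r : ℂ) ^ (-3 : ℤ) + c₁ * (r : ℂ) ^ (-4 : ℤ) + c₂ * (r : ℂ) ^ (-5 : ℤ) + c₃ * (r : ℂ) ^ (-6 : ℤ))) * Ψ₀ r) =O[atTop] (fun r : ℝ => r ^ (-13 : ℤ)) := wk (by norm_num) (mulO' (mulO' oP4 h2) oΨ₀)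
    have t3 : (fun r : ℝ => (e₀ * (r : ℂ) ^ (-4 : ℤ)) * (c₀ * (r : ℂ) ^ (-3 : ℤ) + c₁ * (r : ℂ) ^ (-4 : ℤ) + c₂ * (r : ℂ) ^ (-5 : ℤ) + c₃ * (r : ℂ) ^ (-6 : ℤ)) * (Ψ₀ r - (a₀ * (r : ℂ) ^ (-5 : ℤ)))) =O[atTop] (fun r : ℝ => r ^ (-13 : ℤ)) := wk (by norm_num) (mulO' (mulO' oP4 oP2) h0)
    have t4 : (fun r : ℝ => (Ψ₃ r - (d₀ * (r : ℂ) ^ (-4 : ℤ) + d₁ * (r : ℂ) ^ (-5 : ℤ))) * Ψ₂ r * Ψ₁ r) =O[atTop] (fun r : ℝ => r ^ (-13 : ℤ)) := wk (by norm_num) (mulO' (mulO' h3 oΨ₂) oΨ₁)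
    have t5 : (fun r : ℝ => (d₀ * (r : ℂ) ^ (-4 : ℤ) + d₁ * (r : ℂ) ^ (-5 : ℤ)) * (Ψ₂ r - (c₀ * (r : ℂ) ^ (-3 : ℤ) + c₁ * (r : ℂ) ^ (-4 : ℤ) + c₂ * (r : ℂ) ^ (-5 : ℤ) + c₃ * (r : ℂ) ^ (-6 : ℤ))) * Ψ₁ r) =O[atTop] (fun r : ℝ => r ^ (-13 : ℤ)) := wk (by norm_num) (mulO' (mulO' oP3 h2) oΨ₁)
    have t6 : (fun r : ℝ => (d₀ * (r : ℂ) ^ (-4 : ℤ) + d₁ * (r : ℂ) ^ (-5 : ℤ)) * (c₀ * (r : ℂ) ^ (-3 : ℤ) + c₁ * (r : ℂ) ^ (-4 : ℤ) + c₂ * (r : ℂ) ^ (-5 : ℤ) + c₃ * (r : ℂ) ^ (-6 : ℤ)) * (Ψ₁ r - (b₀ * (r : ℂ) ^ (-4 : ℤ) + b₁ * (r : ℂ) ^ (-5 : ℤ)))) =O[atTop] (fun r : ℝ => r ^ (-13 : ℤ)) := wk (by norm_num) (mulO' (mulO' oP3 oP2) h1)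
    have t7a : (fun r : ℝ => Ψ₂ r * Ψ₂ r + Ψ₂ r * (c₀ * (r : ℂ) ^ (-3 : ℤ) + c₁ * (r : ℂ) ^ (-4 : ℤ) + c₂ * (r : ℂ) ^ (-5 : ℤ) + c₃ * (r : ℂ) ^ (-6 : ℤ)) + (c₀ * (r : ℂ) ^ (-3 : ℤ) + c₁ * (r : ℂ) ^ (-4 : ℤ) + c₂ * (r : ℂ) ^ (-5 : ℤ) + c₃ * (r : ℂ) ^ (-6 : ℤ)) * (c₀ * (r : ℂ) ^ (-3 : ℤ) + c₁ * (r : ℂ) ^ (-4 : ℤ) + c₂ * (r : ℂ) ^ (-5 : ℤ) + c₃ * (r : ℂ) ^ (-6 : ℤ))) =O[atTop] (fun r : ℝ => r ^ (-6 : ℤ)) :=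
      ((wk (by norm_num) (mulO' oΨ₂ oΨ₂)).add (wk (by norm_num) (mulO' oΨ₂ oP2))).add (wk (by norm_num) (mulO' oP2 oP2))
    have t7 : (fun r : ℝ => (Ψ₂ r - (c₀ * (r : ℂ) ^ (-3 : ℤ) + c₁ * (r : ℂ) ^ (-4 : ℤ) + c₂ * (r : ℂ) ^ (-5 : ℤ) + c₃ * (r : ℂ) ^ (-6 : ℤ))) * (Ψ₂ r * Ψ₂ r + Ψ₂ r * (c₀ * (r : ℂ) ^ (-3 : ℤ) + c₁ * (r : ℂ) ^ (-4 : ℤ) + c₂ * (r : ℂ) ^ (-5 : ℤ) + c₃ * (r : ℂ) ^ (-6 : ℤ)) + (c₀ * (r : ℂ) ^ (-3 : ℤ) + c₁ * (r : ℂ) ^ (-4 : ℤ) + c₂ * (r : ℂ) ^ (-5 : ℤ) + c₃ * (r : ℂ) ^ (-6 : ℤ)) * (c₀ * (r : ℂ) ^ (-3 : ℤ) + c₁ * (r : ℂ) ^ (-4 : ℤ) + c₂ * (r : ℂ) ^ (-5 : ℤ) + c₃ * (r : ℂ) ^ (-6 : ℤ)))) =O[atTop] (fun r : ℝ => r ^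 (-13 : ℤ)) := wk (by norm_num) (mulO' h2 t7a)
    have t8 : (fun r : ℝ => (Ψ₃ r - (d₀ * (r : ℂ) ^ (-4 : ℤ) + d₁ * (r : ℂ) ^ (-5 : ℤ))) * (Ψ₃ r + (d₀ * (r : ℂ) ^ (-4 : ℤ) + d₁ * (r : ℂ) ^ (-5 : ℤ))) * Ψ₀ r) =O[atTop] (fun r : ℝ => r ^ (-13 : ℤ)) := wk (by norm_num) (mulO' (mulO' h3 (oΨ₃.add oP3)) oΨ₀)
    have t9 : (fun r : ℝ => (d₀ * (r : ℂ) ^ (-4 : ℤ) + d₁ * (r : ℂ) ^ (-5 : ℤ)) * (d₀ * (r : ℂ) ^ (-4 : ℤ) + d₁ * (r : ℂ) ^ (-5 : ℤ)) * (Ψ₀ r - (a₀ * (r : ℂ) ^ (-5 : ℤ)))) =O[atTop] (fun r : ℝ => r ^ (-13 : ℤ)) := wk (by norm_num) (mulO' (mulO' oP3 oP3) h0)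
    have t10 : (fun r : ℝ => (Ψ₁ r - (b₀ * (r : ℂ) ^ (-4 : ℤ) + b₁ * (r : ℂ) ^ (-5 : ℤ))) * (Ψ₁ r + (b₀ * (r : ℂ) ^ (-4 : ℤ) + b₁ * (r : ℂ) ^ (-5 : ℤ))) * Ψ₄ r) =O[atTop] (fun r : ℝ => r ^ (-13 : ℤ)) := wk (by norm_num) (mulO' (mulO' h1 (oΨ₁.add oP1)) oΨ₄)
    have t11 : (fun r : ℝ => (b₀ * (r : ℂ) ^ (-4 : ℤ) + b₁ * (r : ℂ) ^ (-5 : ℤ)) * (b₀ * (r : ℂ) ^ (-4 : ℤ) + b₁ * (r : ℂ) ^ (-5 : ℤ)) * (Ψ₄ r - (e₀ * (r : ℂ) ^ (-4 : ℤ)))) =O[atTop] (fun r : ℝ => r ^ (-13 : ℤ)) := wk (by norm_num) (mulO' (mulO' oP1 oP1) h4)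
    exact (((((((((t1.add t2).add t3).add (t4.const_mul_left 2)).add (t5.const_mul_left 2)).add (t6.const_mul_left 2)).sub t7).sub t8).sub t9).sub t10).sub t11
  have hBA : (fun r : ℝ => IpF r - AF r) =O[atTop] (fun r : ℝ => r ^ (-10 : ℤ)) := by
    have e : (fun r : ℝ => IpF r - AF r) = fun r : ℝ => ((3 : ℂ) * c₂ ^ 2) * (r : ℂ) ^ (-10 : ℤ) + ((6 : ℂ) * c₁ * c₃) * (r : ℂ) ^ (-10 : ℤ) + (-(4 : ℂ) * b₁ * d₁) * (r : ℂ) ^ (-10 : ℤ) + ((6 : ℂ) * c₂ * c₃) * (r : ℂ) ^ (-11 : ℤ) + ((3 : ℂ) * c₃ ^ 2) * (r : ℂ) ^ (-12 : ℤ) := by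
      funext r; simp only [hIpF, hAF, hi6, hi7, hi8, hi9, zpow_neg, ← inv_pow, zpow_ofNat]; ring
    rw [e]
    exact (((((cO _ (by norm_num)).add (cO _ (by norm_num))).add (cO _ (by norm_num))).add (cO _ (by norm_num))).add (cO _ (by norm_num)))
  have hDC : (fun r : ℝ => JpF r - CF r) =O[atTop] (fun r : ℝ => r ^ (-13 : ℤ)) := by
    have e : (fun r : ℝ => JpF r - CF r) = fun r : ℝ => (-(3 : ℂ) * c₁ ^ 2 * c₂) * (r : ℂ) ^ (-13 : ℤ) + (-(3 : ℂ) * c₀ * c₂ ^ 2) * (r : ℂ) ^ (-13 : ℤ) + (-(6 : ℂ) * c₀ * c₁ * c₃) * (r : ℂ) ^ (-13 : ℤ) + ((2 : ℂ) * b₁ * c₁ * d₀) * (r : ℂ) ^ (-13 : ℤ) + ((2 : ℂ) * b₁ * c₀ * d₁) * (r : ℂ) ^ (-13 : ℤ) + ((2 : ℂ) * b₀ * c₂ * d₀) * (r : ℂ) ^ (-13 : ℤ) + ((2 : ℂ) * b₀ * c₁ * d₁) * (r : ℂ) ^ (-13 : ℤ) + (-(2 : ℂ) * b₀ * b₁ *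 e₀) * (r : ℂ) ^ (-13 : ℤ) + (-a₀ * d₀ ^ 2) * (r : ℂ) ^ (-13 : ℤ) + (a₀ * c₁ * e₀) * (r : ℂ) ^ (-13 : ℤ) + (-(3 : ℂ) * c₁ * c₂ ^ 2) * (r : ℂ) ^ (-14 : ℤ) + (-(3 : ℂ) * c₁ ^ 2 * c₃) * (r : ℂ) ^ (-14 : ℤ) + (-(6 : ℂ) * c₀ * c₂ * c₃) * (r : ℂ) ^ (-14 : ℤ) + ((2 : ℂ) * b₁ * c₂ * d₀) * (r : ℂ) ^ (-14 : ℤ) + ((2 : ℂ) * b₁ * c₁ * d₁) * (r : ℂ) ^ (-14 : ℤ) + (-b₁ ^ 2 * e₀) * (r : ℂ) ^ (-14 : ℤ) + ((2 : ℂ) * b₀ * c₃ * d₀) * (r : ℂ) ^ (-14 : ℤ) + ((2 : ℂ) * b₀ * c₂ * d₁) * (r : ℂ) ^ (-14 : ℤ) + (-(2 : ℂ) * a₀ * d₀ * d₁) * (r : ℂ) ^ (-14 : ℤ) + (a₀ * c₂ * e₀) * (r : ℂ) ^ (-14 : ℤ) + (-c₂ ^ 3) * (r : ℂ) ^ (-15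 : ℤ) + (-(6 : ℂ) * c₁ * c₂ * c₃) * (r : ℂ) ^ (-15 : ℤ) + (-(3 : ℂ) * c₀ * c₃ ^ 2) * (r : ℂ) ^ (-15 : ℤ) + ((2 : ℂ) * b₁ * c₃ * d₀) * (r : ℂ) ^ (-15 : ℤ) + ((2 : ℂ) * b₁ * c₂ * d₁) * (r : ℂ) ^ (-15 : ℤ) + ((2 : ℂ) * b₀ * c₃ * d₁) * (r : ℂ) ^ (-15 : ℤ) + (-a₀ * d₁ ^ 2) * (r : ℂ) ^ (-15 : ℤ) + (a₀ * c₃ * e₀) * (r : ℂ) ^ (-15 : ℤ) + (-(3 : ℂ) * c₂ ^ 2 * c₃) * (r : ℂ) ^ (-16 : ℤ) + (-(3 : ℂ) * c₁ * c₃ ^ 2) * (r : ℂ) ^ (-16 : ℤ) + ((2 : ℂ) * b₁ * c₃ * d₁) * (r : ℂ) ^ (-16 : ℤ) + (-(3 : ℂ) * c₂ * c₃ ^ 2) * (r : ℂ) ^ (-17 : ℤ) + (-c₃ ^ 3) * (r : ℂ) ^ (-18 : ℤ) := by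
      funext r; simp only [hJpF, hCF, hj9, hj10, hj11, hj12, zpow_neg, ← inv_pow, zpow_ofNat]; ring
    rw [e]
    exact (((((((((((((((((((((((((((((((((cO _ (by norm_num)).add (cO _ (by norm_num))).add (cO _ (by norm_num))).add (cO _ (by norm_num))).add (cO _ (by norm_num))).add (cO _ (by norm_num))).add (cO _ (by norm_num))).add (cO _ (by norm_num))).add (cO _ (by norm_num))).add (cO _ (by norm_num))).add (cO _ (by norm_num))).add (cO _ (by norm_num))).add (cO _ (by norm_num))).add (cO _ (by norm_num))).add (cO _ (by norm_num))).add (cO _ (by norm_num))).add (cO _ (by norm_num))).add (cO _ (by norm_num))).add (cO _ (by norm_num))).add (cO _ (by norm_num))).add (cO _ (by norm_num))).add (cO _ (by norm_num))).add (cO _ (by norm_num))).add (cO _ (by norm_num))).add (cO _ (by norm_num))).add (cO _ (by norm_num))).add (cO _ (by norm_num))).add (cO _ (by norm_num))).add (cO _ (by norm_num))).add (cO _ (by norm_num))).add (cO _ (by norm_num))).add (cO _ (by norm_num))).add (cO _ (by norm_num)))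
  have h18 : i₆ ^ 3 - 27 * j₉ ^ 2 = 0 := by simp only [hi6, hj9]; ring
  have h19 : 3 * i₆ ^ 2 * i₇ - 54 * (j₉ * j₁₀) = 0 := by simp only [hi6, hi7, hj9, hj10]; ring
  have h20 : 3 * i₆ * i₇ ^ 2 + 3 * i₆ ^ 2 * i₈ - 27 * j₁₀ ^ 2 - 54 * (j₉ * j₁₁) = 0 := by
    simp only [hi6, hi7, hi8, hj9, hj10, hj11]; ring
  have h21 : i₇ ^ 3 + 6 * i₆ * i₇ * i₈ + 3 * i₆ ^ 2 * i₉ - 54 * (j₁₀ * j₁₁) - 54 * (j₉ * j₁₂) = 27 * c₀ ^ 3 * e₀ * (3 * a₀ * c₀ - 2 * b₀ ^ 2) := by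
    simp only [hi6, hi7, hi8, hi9, hj9, hj10, hj11, hj12]; ring
  have hAC : (fun r : ℝ => AF r * AF r * AF r - 27 * (CF r * CF r) - 27 * c₀ ^ 3 * e₀ * (3 * a₀ * c₀ - 2 * b₀ ^ 2) * (r : ℂ) ^ (-21 : ℤ)) =O[atTop] (fun r : ℝ => r ^ (-22 : ℤ)) := by
    have e : (fun r : ℝ => AF r * AF r * AF r - 27 * (CF r * CF r) - 27 * c₀ ^ 3 * e₀ * (3 * a₀ * c₀ - 2 * b₀ ^ 2) * (r : ℂ) ^ (-21 : ℤ)) = fun r : ℝ =>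
        (-(27 : ℂ) * j₁₁ ^ 2 - (54 : ℂ) * j₁₀ * j₁₂ + (3 : ℂ) * i₇ ^ 2 * i₈ + (3 : ℂ) * i₆ * i₈ ^ 2 + (6 : ℂ) * i₆ * i₇ * i₉) * (r : ℂ) ^ (-22 : ℤ) + (-(54 : ℂ) * j₁₁ * j₁₂ + (3 : ℂ) * i₇ * i₈ ^ 2 + (3 : ℂ) * i₇ ^ 2 * i₉ + (6 : ℂ) * i₆ * i₈ * i₉) * (r : ℂ) ^ (-23 : ℤ) + (-(27 : ℂ) * j₁₂ ^ 2 + i₈ ^ 3 + (6 : ℂ) * i₇ * i₈ * i₉ + (3 : ℂ) * i₆ * i₉ ^ 2) * (r : ℂ) ^ (-24 : ℤ) + ((3 : ℂ) * i₈ ^ 2 * i₉ + (3 : ℂ) * i₇ * i₉ ^ 2) * (r : ℂ) ^ (-25 : ℤ) + ((3 : ℂ) * i₈ * i₉ ^ 2) * (r : ℂ) ^ (-26 : ℤ) + (i₉ ^ 3) * (r : ℂ) ^ (-27 : ℤ) := by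
      funext r
      simp only [hAF, hCF, zpow_neg, ← inv_pow, zpow_ofNat]
      linear_combination ((r : ℂ)⁻¹) ^ 18 * h18 + ((r : ℂ)⁻¹) ^ 19 * h19 + ((r : ℂ)⁻¹) ^ 20 * h20 + ((r : ℂ)⁻¹) ^ 21 * h21
    rw [e]
    exact ((((((cO _ (by norm_num)).add (cO _ (by norm_num))).add (cO _ (by norm_num))).add (cO _ (by norm_num))).add (cO _ (by norm_num))).add (cO _ (by norm_num)))
  have hG : (fun r : ℝ => IpF r * IpF r * IpF r - 27 * (JpF r * JpF r) - 27 * c₀ ^ 3 * e₀ * (3 * a₀ * c₀ - 2 * b₀ ^ 2) * (r : ℂ) ^ (-21 : ℤ)) =O[atTop] (fun r : ℝ => r ^ (-22 : ℤ)) := by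
    have e : (fun r : ℝ => IpF r * IpF r * IpF r - 27 * (JpF r * JpF r) - 27 * c₀ ^ 3 * e₀ * (3 * a₀ * c₀ - 2 * b₀ ^ 2) * (r : ℂ) ^ (-21 : ℤ)) = fun r : ℝ =>
        (AF r * AF r * AF r - 27 * (CF r * CF r) - 27 * c₀ ^ 3 * e₀ * (3 * a₀ * c₀ - 2 * b₀ ^ 2) * (r : ℂ) ^ (-21 : ℤ))
          + (IpF r - AF r) * (IpF r * IpF r + IpF r * AF r + AF r * AF r)
          - 27 * ((JpF r - CF r) * (JpF r + CF r)) := by funext r; ring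
    rw [e]
    have q1 : (fun r : ℝ => IpF r * IpF r + IpF r * AF r + AF r * AF r) =O[atTop] (fun r : ℝ => r ^ (-12 : ℤ)) :=
      ((wk (by norm_num) (mulO' oIp oIp)).add (wk (by norm_num) (mulO' oIp oA))).add (wk (by norm_num) (mulO' oA oA))
    have q2 : (fun r : ℝ => (IpF r - AF r) * (IpF r * IpF r + IpF r * AF r + AF r * AF r)) =O[atTop] (fun r : ℝ => r ^ (-22 : ℤ)) := wk (by norm_num) (mulO' hBA q1)
    have q3 : (fun r : ℝ => (JpF r - CF r) * (JpF r + CF r)) =O[atTop] (fun r : ℝ => r ^ (-22 : ℤ)) := wk (by norm_num) (mulO' hDC (oJp.add oC))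
    exact (hAC.add q2).sub (q3.const_mul_left 27)
  have oI : (fun r : ℝ => curvI Ψ₀ Ψ₁ Ψ₂ Ψ₃ Ψ₄ r) =O[atTop] (fun r : ℝ => r ^ (-6 : ℤ)) := by
    have e : (fun r : ℝ => curvI Ψ₀ Ψ₁ Ψ₂ Ψ₃ Ψ₄ r) = fun r : ℝ => (curvI Ψ₀ Ψ₁ Ψ₂ Ψ₃ Ψ₄ r - IpF r) + IpF r := by funext r; ring
    rw [e]; exact (wk (by norm_num) dI).add oIp
  have oJ : (fun r : ℝ => curvJ Ψ₀ Ψ₁ Ψ₂ Ψ₃ Ψ₄ r) =O[atTop] (fun r : ℝ => r ^ (-9 : ℤ)) := by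
    have e : (fun r : ℝ => curvJ Ψ₀ Ψ₁ Ψ₂ Ψ₃ Ψ₄ r) = fun r : ℝ => (curvJ Ψ₀ Ψ₁ Ψ₂ Ψ₃ Ψ₄ r - JpF r) + JpF r := by funext r; ring
    rw [e]; exact (wk (by norm_num) dJ).add oJp
  have efin : (fun r : ℝ => (curvI Ψ₀ Ψ₁ Ψ₂ Ψ₃ Ψ₄ r) ^ 3 - 27 * (curvJ Ψ₀ Ψ₁ Ψ₂ Ψ₃ Ψ₄ r) ^ 2 - 27 * c₀ ^ 3 * e₀ * (3 * a₀ * c₀ - 2 * b₀ ^ 2) * (r : ℂ) ^ (-21 : ℤ)) = fun r : ℝ =>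
      (IpF r * IpF r * IpF r - 27 * (JpF r * JpF r) - 27 * c₀ ^ 3 * e₀ * (3 * a₀ * c₀ - 2 * b₀ ^ 2) * (r : ℂ) ^ (-21 : ℤ))
        + (curvI Ψ₀ Ψ₁ Ψ₂ Ψ₃ Ψ₄ r - IpF r) * (curvI Ψ₀ Ψ₁ Ψ₂ Ψ₃ Ψ₄ r * curvI Ψ₀ Ψ₁ Ψ₂ Ψ₃ Ψ₄ r + curvI Ψ₀ Ψ₁ Ψ₂ Ψ₃ Ψ₄ r * IpF r + IpF r * IpF r)
        - 27 * ((curvJ Ψ₀ Ψ₁ Ψ₂ Ψ₃ Ψ₄ r - JpF r) * (curvJ Ψ₀ Ψ₁ Ψ₂ Ψ₃ Ψ₄ r + JpF r)) := by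
    funext r; ring
  rw [efin]
  have q4 : (fun r : ℝ => curvI Ψ₀ Ψ₁ Ψ₂ Ψ₃ Ψ₄ r * curvI Ψ₀ Ψ₁ Ψ₂ Ψ₃ Ψ₄ r + curvI Ψ₀ Ψ₁ Ψ₂ Ψ₃ Ψ₄ r * IpF r + IpF r * IpF r) =O[atTop] (fun r : ℝ => r ^ (-12 : ℤ)) :=
    ((wk (by norm_num) (mulO' oI oI)).add (wk (by norm_num) (mulO' oI oIp))).add (wk (by norm_num) (mulO' oIp oIp))
  have hB : (fun r : ℝ => (curvI Ψ₀ Ψ₁ Ψ₂ Ψ₃ Ψ₄ r - IpF r) * (curvI Ψ₀ Ψ₁ Ψ₂ Ψ₃ Ψ₄ r * curvI Ψ₀ Ψ₁ Ψ₂ Ψ₃ Ψ₄ r + curvI Ψ₀ Ψ₁ Ψ₂ Ψ₃ Ψ₄ r * IpF r + IpF r * IpF r)) =O[atTop] (fun r : ℝ => r ^ (-22 : ℤ)) :=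
    wk (by norm_num) (mulO' dI q4)
  have hC : (fun r : ℝ => (curvJ Ψ₀ Ψ₁ Ψ₂ Ψ₃ Ψ₄ r - JpF r) * (curvJ Ψ₀ Ψ₁ Ψ₂ Ψ₃ Ψ₄ r + JpF r)) =O[atTop] (fun r : ℝ => r ^ (-22 : ℤ)) :=
    wk (by norm_num) (mulO' dJ (oJ.add oJp))
  exact (hG.add hB).sub (hC.const_mul_left 27)
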